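/- Let m, n₁,…,n_l be positive integers, n := m + n₁ + ⋯ + n_l, and let T be the polynomial ring over 𝔽₂ = ℤ/2 in the indeterminates α₁,…,α_m and β_i^{(p)} for 1 ≤ p ≤ l, 1 ≤ i ≤ ⌊n_p/2⌋. With the conventions α₀ := 1, α_i := α_{2m+1−i} for m < i ≤ 2m+1, α_i := 0 for i < 0 or i > 2m+1, β_0^{(p)} := 1, β_i^{(p)} := β_{n_p−i}^{(p)} for ⌊n_p/2⌋ < i ≤ n_p, β_i^{(p)} := 0 for i < 0 or i > n_p, define μ_j := Σ_{a₁+⋯+a_l = j} β_{a₁}^{(1)}⋯β_{a_l}^{(l)} and ξ_k := Σ_{i=0}^{⌊k/2⌋} α_{k−2i}·μ_i + (binom(2n+1, k) mod 2). Let B ⊆ T be the subring generated by all the β_i^{(p)}. Then for every j ≥ 0 with 2j+1 ≤ m, the element α_{2j+1} + α_{2j} is a B-linear combination of ξ₁,…,ξ_m; in particular α_{2j+1} + α_{2j} lies in the ideal (ξ₁,…,ξ_m) of T. -/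

import Mathlib

open MvPolynomial

/-- A sequence (given as a list) `a₁, …, aₙ` in a commutative ring `A` is `A`-regular if for
each `i`, `aᵢ` is not a zero divisor on `A ⧸ (a₁, …, a_{i-1})`. -/
def IsRegularSeq {A : Type*} [CommRing A] (l : List A) : Prop :=
  ∀ (i : ℕ) (h : i < l.length), ∀ x : A,
    l.get ⟨i, h⟩ * x ∈ Ideal.span {y | y ∈ l.take i} →
      x ∈ Ideal.span {y | y ∈ l.take i}

/-- The element `α_i` of the polynomial ring `T` over `𝔽₂` in the indeterminates
`α₁, …, α_m` and `β_i^{(p)}`, with the conventions `α_0 = 1`, `α_i = α_{2m+1−i}` for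
`m < i ≤ 2m+1`, and `α_i = 0` for `i > 2m+1`. -/
noncomputable def alT (m l : ℕ) (n : Fin l → ℕ) (i : ℕ) :
    MvPolynomial (Fin m ⊕ Σ p : Fin l, Fin (n p / 2)) (ZMod 2) :=
  if h : i ≤ 2 * m + 1 then
    (if h1 : 1 ≤ min i (2 * m + 1 - i) then
      X (Sum.inl ⟨min i (2 * m + 1 - i) - 1, by omega⟩) else 1)
  else 0

/-- The element `β_i^{(p)}` of `T`, with the conventions `β_0^{(p)} = 1`,
`β_i^{(p)} = β_{n_p−i}^{(p)}` for `⌊n_p/2⌋ < i ≤ n_p`, and `β_i^{(p)} = 0` for `i > n_p`. -/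
noncomputable def beT (m l : ℕ) (n : Fin l → ℕ) (p : Fin l) (i : ℕ) :
    MvPolynomial (Fin m ⊕ Σ p : Fin l, Fin (n p / 2)) (ZMod 2) :=
  if h : i ≤ n p then
    (if h1 : 1 ≤ min i (n p - i) then X (Sum.inr ⟨p, ⟨min i (n p - i) - 1, by omega⟩⟩) else 1)
  else 0

/-- `μ_j := Σ_{a₁+⋯+a_l = j} β_{a₁}^{(1)} ⋯ β_{a_l}^{(l)}`. -/
noncomputable def muT (m l : ℕ) (n : Fin l → ℕ) (j : ℕ) :
    MvPolynomial (Fin m ⊕ Σ p : Fin l, Fin (n p / 2)) (ZMod 2) :=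
  ∑ a ∈ (Fintype.piFinset fun _ : Fin l => Finset.range (j + 1)).filter
      (fun a => ∑ p, a p = j),
    ∏ p, beT m l n p (a p)

/-- `ξ_k := Σ_{i=0}^{⌊k/2⌋} α_{k−2i}·μ_i + (binom(2n+1, k) mod 2)`, with
`n = m + n₁ + ⋯ + n_l`. -/
noncomputable def xiT (m l : ℕ) (n : Fin l → ℕ) (k : ℕ) :
    MvPolynomial (Fin m ⊕ Σ p : Fin l, Fin (n p / 2)) (ZMod 2) :=
  (∑ i ∈ Finset.range (k / 2 + 1), alT m l n (k - 2 * i) * muT m l n i) +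
    (Nat.choose (2 * (m + ∑ p, n p) + 1) k :
      MvPolynomial (Fin m ⊕ Σ p : Fin l, Fin (n p / 2)) (ZMod 2))

/-- The subring `B ⊆ T` generated by all the indeterminates `β_i^{(p)}`. -/
noncomputable def BsubT (m l : ℕ) (n : Fin l → ℕ) :
    Subring (MvPolynomial (Fin m ⊕ Σ p : Fin l, Fin (n p / 2)) (ZMod 2)) :=
  Subring.closure (Set.range fun v : Σ p : Fin l, Fin (n p / 2) => X (Sum.inr v))

/-
In characteristic 2 the binomial terms of `ξ_{2k+1} + ξ_{2k}` add up to `binom(2n+2, 2k+1)`, which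
is even, so `ξ_{2k+1} + ξ_{2k} = Σ_{i ≤ k} μ_i γ_{k-i}` with `γ_k := α_{2k+1} + α_{2k}`.
Since `μ_0 = 1` and every `μ_i` lies in `B`, this triangular system can be solved for the `γ_k`
by induction on `k`, expressing each `γ_k` with `2k+1 ≤ m` as a `B`-combination of `ξ₁, …, ξ_m`
(note `ξ_0 = 0`).
-/

open Finset

theorem Subring.exists_coeff_of_mem_span {T α : Type*} [CommRing T] {B : Subring T} {f : α → T}
    {s : Finset α} {x : T} (hx : x ∈ Submodule.span B (f '' s)) :
    ∃ c : α → T, (∀ i, c i ∈ B) ∧ x = ∑ i ∈ s, c i * f i := by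
  obtain ⟨c, hc, rfl⟩ := Finsupp.mem_span_image_iff_linearCombination B |>.mp hx
  refine ⟨fun i => c i, fun i => (c i).2, ?_⟩
  rw [Finsupp.linearCombination_apply]
  exact Finsupp.sum_of_support_subset c ((Finsupp.mem_supported _ _).mp hc) _ fun _ _ => zero_smul _ _

theorem Submodule.mem_of_sum_range_smul_mem {R M : Type*} [Ring R] [AddCommGroup M] [Module R M]
    (S : Submodule R M) {μ : ℕ → R} {γ : ℕ → M} (hμ : μ 0 = 1) {K : ℕ}
    (h : ∀ k ≤ K, ∑ i ∈ range (k + 1), μ i • γ (k - i) ∈ S) : ∀ k ≤ K, γ k ∈ S := by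
  intro k
  induction k using Nat.strong_induction_on with
  | _ k ih =>
    intro hk
    have hsplit := sum_range_succ' (fun i => μ i • γ (k - i)) k
    rw [hμ, one_smul, Nat.sub_zero] at hsplit
    rw [eq_sub_of_add_eq' hsplit.symm]
    refine sub_mem (h k hk) (sum_mem fun i hi => smul_mem _ _ (ih _ ?_ (by omega)))
    have := mem_range.mp hi
    omega

theorem Nat.two_dvd_choose_two_mul_odd (N k : ℕ) : 2 ∣ (2 * N).choose (2 * k + 1) := by
  rcases N with _ | N
  · simp
  have hdvd : 2 ∣ (2 * (N + 1)).choose (2 * k + 1) * (2 * k + 1) := by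
    rw [show 2 * (N + 1) = 2 * N + 1 + 1 by ring, ← Nat.add_one_mul_choose_eq]
    exact ⟨(N + 1) * (2 * N + 1).choose (2 * k), by ring⟩
  exact (Nat.prime_two.dvd_mul.mp hdvd).resolve_right (by omega)

section

variable (m l : ℕ) (n : Fin l → ℕ)

local notation "T" => MvPolynomial (Fin m ⊕ Σ p : Fin l, Fin (n p / 2)) (ZMod 2)

lemma beT_mem_BsubT (p : Fin l) (i : ℕ) : beT m l n p i ∈ BsubT m l n := by
  unfold beT
  split_ifs
  · exact Subring.subset_closure ⟨_, rfl⟩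
  · exact one_mem _
  · exact zero_mem _

lemma muT_mem_BsubT (j : ℕ) : muT m l n j ∈ BsubT m l n :=
  Subring.sum_mem _ fun a _ => Subring.prod_mem _ fun p _ => beT_mem_BsubT m l n p (a p)

lemma alT_zero : alT m l n 0 = 1 := by
  simp [alT]

lemma muT_zero : muT m l n 0 = 1 := by
  have hsupp : (Fintype.piFinset fun _ : Fin l => range 1).filter (fun a => ∑ p, a p = 0) =
      {0} := by
    ext a
    simp [funext_iff]
  rw [muT, hsupp, sum_singleton]
  exact prod_eq_one fun p _ => by simp [beT]

lemma xiT_zero : xiT m l n 0 = 0 := by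
  simp [xiT, alT_zero, muT_zero, CharTwo.add_self_eq_zero]

lemma xiT_two_mul_add_one_add_xiT_two_mul (k : ℕ) :
    xiT m l n (2 * k + 1) + xiT m l n (2 * k) =
      ∑ i ∈ range (k + 1),
        muT m l n i * (alT m l n (2 * (k - i) + 1) + alT m l n (2 * (k - i))) := by
  have hchoose : ((2 * (m + ∑ p, n p) + 1).choose (2 * k + 1) : T) +
      ((2 * (m + ∑ p, n p) + 1).choose (2 * k) : T) = 0 := by
    rw [← Nat.cast_add, add_comm, ← Nat.choose_succ_succ', CharP.cast_eq_zero_iff T 2]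
    simpa [mul_add] using Nat.two_dvd_choose_two_mul_odd (m + ∑ p, n p + 1) k
  have hterm : ∀ i ∈ range (k + 1),
      muT m l n i * (alT m l n (2 * (k - i) + 1) + alT m l n (2 * (k - i))) =
        alT m l n (2 * k + 1 - 2 * i) * muT m l n i + alT m l n (2 * k - 2 * i) * muT m l n i := by
    intro i hi
    rw [mem_range] at hi
    rw [show 2 * (k - i) + 1 = 2 * k + 1 - 2 * i by omega, show 2 * (k - i) = 2 * k - 2 * i by omega]
    ring
  rw [sum_congr rfl hterm, sum_add_distrib, xiT, xiT, show (2 * k + 1) / 2 = k by omega,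
    show 2 * k / 2 = k by omega]
  linear_combination hchoose

lemma alT_add_alT_mem_span (j : ℕ) (hj : 2 * j + 1 ≤ m) :
    alT m l n (2 * j + 1) + alT m l n (2 * j) ∈
      Submodule.span (BsubT m l n) (xiT m l n '' (Icc 1 m : Finset ℕ)) := by
  have hxi : ∀ i ≤ m, xiT m l n i ∈
      Submodule.span (BsubT m l n) (xiT m l n '' (Icc 1 m : Finset ℕ)) := by
    intro i hi
    rcases Nat.eq_zero_or_pos i with rfl | hpos
    · rw [xiT_zero]
      exact zero_mem _
    · exact Submodule.subset_span ⟨i, mem_Icc.mpr ⟨hpos, hi⟩, rfl⟩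
  refine Submodule.mem_of_sum_range_smul_mem _ (μ := fun i => ⟨muT m l n i, muT_mem_BsubT m l n i⟩)
    (γ := fun k => alT m l n (2 * k + 1) + alT m l n (2 * k)) (Subtype.ext (muT_zero m l n))
    (K := j) (fun k hk => ?_) j le_rfl
  simp only [Subring.smul_def, smul_eq_mul, ← xiT_two_mul_add_one_add_xiT_two_mul]
  exact add_mem (hxi _ (by omega)) (hxi _ (by omega))

end

theorem stmt_18_general (m l : ℕ) (n : Fin l → ℕ)
    (j : ℕ) (hj : 2 * j + 1 ≤ m) :
    (∃ c : ℕ → MvPolynomial (Fin m ⊕ Σ p : Fin l, Fin (n p / 2)) (ZMod 2),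
      (∀ i, c i ∈ BsubT m l n) ∧
      alT m l n (2 * j + 1) + alT m l n (2 * j) = ∑ i ∈ Finset.Icc 1 m, c i * xiT m l n i) ∧
    alT m l n (2 * j + 1) + alT m l n (2 * j) ∈
      Ideal.span {x | ∃ i, 1 ≤ i ∧ i ≤ m ∧ x = xiT m l n i} := by
  obtain ⟨c, hc, hrepr⟩ := Subring.exists_coeff_of_mem_span (alT_add_alT_mem_span m l n j hj)
  refine ⟨⟨c, hc, hrepr⟩, hrepr ▸ Ideal.sum_mem _ fun i hi => Ideal.mul_mem_left _ _ ?_⟩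
  rw [mem_Icc] at hi
  exact Ideal.subset_span ⟨i, hi.1, hi.2, rfl⟩

/-- For `2j+1 ≤ m`, the element `α_{2j+1} + α_{2j}` is a `B`-linear combination of
`ξ₁, …, ξ_m`; in particular it lies in the ideal `(ξ₁, …, ξ_m)` of `T`. -/
theorem stmt_18 (m l : ℕ) (hm : 1 ≤ m) (hl : 1 ≤ l) (n : Fin l → ℕ) (hn : ∀ p, 1 ≤ n p)
    (j : ℕ) (hj : 2 * j + 1 ≤ m) :
    (∃ c : ℕ → MvPolynomial (Fin m ⊕ Σ p : Fin l, Fin (n p / 2)) (ZMod 2),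
      (∀ i, c i ∈ BsubT m l n) ∧
      alT m l n (2 * j + 1) + alT m l n (2 * j) = ∑ i ∈ Finset.Icc 1 m, c i * xiT m l n i) ∧
    alT m l n (2 * j + 1) + alT m l n (2 * j) ∈
      Ideal.span {x | ∃ i, 1 ≤ i ∧ i ≤ m ∧ x = xiT m l n i} :=
  stmt_18_general m l n j hj
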